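/- arXiv:1704.04084 — 2 statements merged into one kernel-verified Lean document; each statement's English description precedes it below -/
import Mathlib

section
/- Let S be a semigroup generated by a well-ordered set A, with ν : A⁺ → S extending the inclusion. If w ∈ A⁺ is a reduced word for S of length at least 2, then its proper prefix p(w) (w with last letter removed) and its proper suffix s(w) (w with first letter removed) are both reduced words for S. -/
def shortLex {A : Type*} (r : A → A → Prop) (u v : List A) : Prop :=
  u.length < v.length ∨ (u.length = v.length ∧ List.Lex r u v)

def shortLexLE {A : Type*} (r : A → A → Prop) (u v : List A) : Prop :=
  shortLex r u v ∨ u = v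

def toL {A : Type*} (x : FreeSemigroup A) : List A := x.head :: x.tail

/-- `w` is a reduced word: it is short-lex minimal in its ν-fiber. -/
def Reduced {A S : Type*} [LinearOrder A] [Semigroup S] (ν : FreeSemigroup A →ₙ* S)
    (w : FreeSemigroup A) : Prop :=
  ∀ v : FreeSemigroup A, ν v = ν w → shortLexLE (· < ·) (toL w) (toL v)

/-!
If `ν v = ν u` then `ν (v * x) = ν (u * x)` and `ν (x * v) = ν (x * u)`, so reducedness of
`u * x` (resp. `x * u`) compares it with `v * x` (resp. `x * v`); short-lex order can be
cancelled on a common suffix of words of equal length and on any common prefix.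
-/

namespace List

variable {α : Type*} {r : α → α → Prop}

theorem Lex.of_append_right_of_length_eq {x y : List α} (z : List α)
    (hlen : x.length = y.length) (h : Lex r (x ++ z) (y ++ z)) : Lex r x y ∨ x = y := by
  induction x generalizing y with
  | nil => exact .inr (length_eq_zero_iff.mp hlen.symm).symm
  | cons a x ih =>
    obtain _ | ⟨c, y⟩ := y
    · simp at hlen
    cases h with
    | rel hac => exact .inl (.rel hac)
    | cons h =>
      rcases ih (Nat.succ.inj hlen) h with h | rfl
      · exact .inl (.cons h)
      · exact .inr rfl

theorem Lex.of_append_left [Std.Irrefl r] {x y : List α} :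
    ∀ z : List α, Lex r (z ++ x) (z ++ y) → Lex r x y
  | [], h => h
  | _ :: z, h => of_append_left z (lex_cons_iff.mp h)

end List

section ShortLex

variable {α : Type*} {r : α → α → Prop} {x y : List α}

theorem shortLexLE.of_append_right (z : List α) (h : shortLexLE r (x ++ z) (y ++ z)) :
    shortLexLE r x y := by
  rcases h with (hlt | ⟨hlen, hlex⟩) | heq
  · exact .inl (.inl (by simpa using hlt))
  · have hlen : x.length = y.length := by simpa using hlen
    exact (hlex.of_append_right_of_length_eq z hlen).imp (fun h => .inr ⟨hlen, h⟩) id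
  · exact .inr (List.append_cancel_right heq)

theorem shortLexLE.of_append_left [Std.Irrefl r] (z : List α)
    (h : shortLexLE r (z ++ x) (z ++ y)) : shortLexLE r x y := by
  rcases h with (hlt | ⟨hlen, hlex⟩) | heq
  · exact .inl (.inl (by simpa using hlt))
  · exact .inl (.inr ⟨by simpa using hlen, hlex.of_append_left z⟩)
  · exact .inr (List.append_cancel_left heq)

end ShortLex

theorem toL_mul {A : Type*} (x y : FreeSemigroup A) : toL (x * y) = toL x ++ toL y := rfl

namespace Reduced

variable {A S : Type*} [LinearOrder A] [Semigroup S] {ν : FreeSemigroup A →ₙ* S}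

theorem of_mul_right {u : FreeSemigroup A} (x : FreeSemigroup A) (h : Reduced ν (u * x)) :
    Reduced ν u := fun v hv =>
  shortLexLE.of_append_right (toL x) <| by
    simpa only [toL_mul] using h (v * x) (by rw [map_mul, map_mul, hv])

theorem of_mul_left {u : FreeSemigroup A} (x : FreeSemigroup A) (h : Reduced ν (x * u)) :
    Reduced ν u := fun v hv =>
  shortLexLE.of_append_left (toL x) <| by
    simpa only [toL_mul] using h (x * v) (by rw [map_mul, map_mul, hv])

end Reduced

theorem stmt12_general {S : Type*} [Semigroup S] {A : Set S} [LinearOrder ↥A]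
    (ν : FreeSemigroup ↥A →ₙ* S)
    (w : FreeSemigroup ↥A) (hw : Reduced ν w) :
    (∀ (u : FreeSemigroup ↥A) (b : ↥A), w = u * FreeSemigroup.of b → Reduced ν u) ∧
    (∀ (a : ↥A) (v : FreeSemigroup ↥A), w = FreeSemigroup.of a * v → Reduced ν v) := by
  constructor
  · rintro u b rfl
    exact hw.of_mul_right _
  · rintro a v rfl
    exact hw.of_mul_left _

theorem stmt12 {S : Type*} [Semigroup S] {A : Set S} [LinearOrder ↥A]
    (ν : FreeSemigroup ↥A →ₙ* S) (hν : ∀ a : ↥A, ν (FreeSemigroup.of a) = ↑a)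
    (w : FreeSemigroup ↥A) (hw : Reduced ν w) (h2 : 2 ≤ (toL w).length) :
    (∀ (u : FreeSemigroup ↥A) (b : ↥A), w = u * FreeSemigroup.of b → Reduced ν u) ∧
    (∀ (a : ↥A) (v : FreeSemigroup ↥A), w = FreeSemigroup.of a * v → Reduced ν v) :=
  stmt12_general ν w hw
end

section
/- Let S be a semigroup, A ⊆ S well-ordered, ν : A⁺ → S the homomorphism extending inclusion. For all words u, v ∈ A⁺, the reduced word of uv equals the reduced word of ū v̄, i.e., (uv)‾ = (ū v̄)‾. -/
lemma toL_inj {A : Type*} {x y : FreeSemigroup A} (h : toL x = toL y) : x = y := by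
  unfold toL at h
  cases x; cases y
  simp_all

lemma reduced_unique {A S : Type*} [LinearOrder A] [Semigroup S] {ν : FreeSemigroup A →ₙ* S}
    {x y : FreeSemigroup A} (hx : Reduced ν x) (hy : Reduced ν y) (h : ν x = ν y) : x = y := by
  have h1 := hx y h.symm
  have h2 := hy x h
  rcases h1 with h1 | h1
  · rcases h2 with h2 | h2
    · exfalso
      rcases h1 with h1 | ⟨_, h1⟩ <;> rcases h2 with h2 | ⟨_, h2⟩
      · omega
      · omega
      · omega
      · exact lt_asymm (show toL x < toL y from h1) h2
    · exact (toL_inj h2).symm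
  · exact toL_inj h1

theorem stmt16 {S : Type*} [Semigroup S] {A : Set S} [LinearOrder ↥A]
    (ν : FreeSemigroup ↥A →ₙ* S) (hν : ∀ a : ↥A, ν (FreeSemigroup.of a) = ↑a)
    (bar : FreeSemigroup ↥A → FreeSemigroup ↥A)
    (hred : ∀ w, Reduced ν (bar w)) (heq : ∀ w, ν (bar w) = ν w)
    (u v : FreeSemigroup ↥A) :
    bar (u * v) = bar (bar u * bar v) := by
  apply reduced_unique (hred _) (hred _)
  rw [heq, heq, map_mul, map_mul, heq, heq]
end
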